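/- arXiv:2605.27086 — 2 statements merged into one kernel-verified Lean document; each statement's English description precedes it below -/
import Mathlib

section
/- Consider the space ℓ² of square-summable real sequences, a sequence m : ℕ → (0,∞) with mₙ → 0, and a bounded smooth function f : ℝ_{>0} → ℝ_{>0} with f(x) → 0 as x → ∞. Define at each x ∈ ℓ² the quadratic form G_x(u) = inf{ Σᵢ mᵢ vᵢ² + f(‖x‖²)·‖w‖² : v + w = u }. Then the induced path-length geodesic distance on ℓ² is identically zero: for all x, y ∈ ℓ², and every ε > 0, there exists a piecewise-linear path from x to y of G-length less than ε. -/
/-- The infimal-convolution quadratic form G_x(u) on ℓ², combining the weighted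
ℓ²-metric Σᵢ mᵢ vᵢ² and the conformal metric f(‖x‖²)·‖w‖². -/
noncomputable def Gconv (m : ℕ → ℝ) (f : ℝ → ℝ)
    (x u : lp (fun _ : ℕ => ℝ) 2) : ℝ :=
  sInf {c : ℝ | ∃ v w : lp (fun _ : ℕ => ℝ) 2, v + w = u ∧
    c = (∑' i, m i * (v i) ^ 2) + f (‖x‖ ^ 2) * ‖w‖ ^ 2}

/-- The G-length of the linear segment from p to q. -/
noncomputable def segLen (m : ℕ → ℝ) (f : ℝ → ℝ)
    (p q : lp (fun _ : ℕ => ℝ) 2) : ℝ :=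
  ∫ t in (0:ℝ)..1, Real.sqrt (Gconv m f ((1 - t) • p + t • q) (q - p))

lemma Gconv_le (m : ℕ → ℝ) (f : ℝ → ℝ) (x u v w : lp (fun _ : ℕ => ℝ) 2)
    (hvw : v + w = u)
    (hc : 0 ≤ (∑' i, m i * (v i) ^ 2) + f (‖x‖ ^ 2) * ‖w‖ ^ 2) :
    Gconv m f x u ≤ (∑' i, m i * (v i) ^ 2) + f (‖x‖ ^ 2) * ‖w‖ ^ 2 := by
  by_cases h : BddBelow {c : ℝ | ∃ v w : lp (fun _ : ℕ => ℝ) 2, v + w = u ∧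
      c = (∑' i, m i * (v i) ^ 2) + f (‖x‖ ^ 2) * ‖w‖ ^ 2}
  · exact csInf_le h ⟨v, w, hvw, rfl⟩
  · rw [Gconv, Real.sInf_of_not_bddBelow h]; exact hc

lemma segLen_le (m : ℕ → ℝ) (f : ℝ → ℝ) (p q : lp (fun _ : ℕ => ℝ) 2)
    {B : ℝ}
    (h : ∀ t ∈ Set.Ioc (0:ℝ) 1,
      Real.sqrt (Gconv m f ((1 - t) • p + t • q) (q - p)) ≤ B) :
    segLen m f p q ≤ B := by
  rw [segLen, intervalIntegral.integral_of_le zero_le_one]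
  calc (∫ t in Set.Ioc (0:ℝ) 1, Real.sqrt (Gconv m f ((1 - t) • p + t • q) (q - p)))
      ≤ ∫ _t in Set.Ioc (0:ℝ) 1, B := by
        apply MeasureTheory.integral_mono_of_nonneg
        · exact Filter.Eventually.of_forall fun t => Real.sqrt_nonneg _
        · exact MeasureTheory.integrableOn_const measure_Ioc_lt_top.ne
        · filter_upwards [MeasureTheory.ae_restrict_mem measurableSet_Ioc] with t ht
            using h t ht
    _ = B := by simp

lemma tsum_single_sq (m : ℕ → ℝ) (N : ℕ) (r : ℝ) :
    (∑' i, m i * ((lp.single 2 N r : lp (fun _ : ℕ => ℝ) 2) i) ^ 2) = m N * r ^ 2 := by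
  rw [tsum_eq_single N]
  · rw [lp.single_apply_self]
  · intro i hi
    rw [lp.single_apply_ne (E := fun _ : ℕ => ℝ) 2 N r hi]
    ring

/-- Bound for a segment whose difference is a single coordinate vector. -/
lemma segLen_single_le (m : ℕ → ℝ) (f : ℝ → ℝ) (p q : lp (fun _ : ℕ => ℝ) 2)
    (N : ℕ) (r : ℝ) (hmN : 0 ≤ m N) (h : q - p = lp.single 2 N r) :
    segLen m f p q ≤ Real.sqrt (m N) * |r| := by
  apply segLen_le
  intro t _
  have hle : Gconv m f ((1 - t) • p + t • q) (q - p) ≤ m N * r ^ 2 := by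
    have := Gconv_le m f ((1 - t) • p + t • q) (q - p) (lp.single 2 N r) 0
      (by rw [add_zero, h]) ?_
    · rw [tsum_single_sq] at this
      simpa using this
    · rw [tsum_single_sq]
      simp only [norm_zero]
      have : (0:ℝ) ^ 2 = 0 := by norm_num
      rw [this, mul_zero, add_zero]
      positivity
  calc Real.sqrt (Gconv m f ((1 - t) • p + t • q) (q - p))
      ≤ Real.sqrt (m N * r ^ 2) := Real.sqrt_le_sqrt hle
    _ = Real.sqrt (m N) * |r| := by
        rw [Real.sqrt_mul hmN, Real.sqrt_sq_eq_abs]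

set_option maxHeartbeats 1000000 in
/-- Vanishing geodesic distance: if m : ℕ → (0,∞) tends to 0 and f : ℝ_{>0} → ℝ_{>0}
is smooth, bounded with f(x) → 0 as x → ∞, then for the infimal-convolution metric G
on ℓ², any two points can be joined by a piecewise-linear path of arbitrarily small
G-length. -/
theorem stmt8 (m : ℕ → ℝ) (hm : ∀ i, 0 < m i)
    (hm0 : Filter.Tendsto m Filter.atTop (nhds 0))
    (f : ℝ → ℝ) (hfpos : ∀ x : ℝ, 0 < x → 0 < f x)
    (hfsmooth : ContDiffOn ℝ (⊤ : ℕ∞) f (Set.Ioi 0))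
    (hfbdd : ∃ C : ℝ, ∀ x : ℝ, 0 < x → f x ≤ C)
    (hflim : Filter.Tendsto f Filter.atTop (nhds 0)) :
    ∀ x y : lp (fun _ : ℕ => ℝ) 2, ∀ ε : ℝ, 0 < ε →
      ∃ (n : ℕ) (p : Fin (n + 1) → lp (fun _ : ℕ => ℝ) 2),
        p 0 = x ∧ p (Fin.last n) = y ∧
        ∑ i : Fin n, segLen m f (p i.castSucc) (p i.succ) < ε := by
  intro x y ε hε
  set M := max ‖x‖ ‖y‖ with hM
  have hxM : ‖x‖ ≤ M := le_max_left _ _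
  have hyM : ‖y‖ ≤ M := le_max_right _ _
  have hM0 : 0 ≤ M := le_trans (norm_nonneg x) hxM
  have hδ : 0 < (ε / (4 * (‖y - x‖ + 1))) ^ 2 := by positivity
  set δ := (ε / (4 * (‖y - x‖ + 1))) ^ 2 with hδdef
  obtain ⟨S, hS⟩ := Filter.eventually_atTop.mp (hflim.eventually (gt_mem_nhds hδ))
  set a := max S 1 with ha
  have ha1 : 1 ≤ a := le_max_right _ _
  have haS : S ≤ a := le_max_left _ _
  set R := M + a with hR
  have hRpos : 0 < R := by simp only [hR]; linarith
  obtain ⟨N, hN⟩ := (hm0.eventually (gt_mem_nhds (show (0:ℝ) < (ε / (4 * (R + 1))) ^ 2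
    by positivity))).exists
  set e : lp (fun _ : ℕ => ℝ) 2 := lp.single 2 N R with he
  have hnorme : ‖e‖ = R := by
    rw [he]
    have := lp.norm_single (E := fun _ : ℕ => ℝ) (p := 2) (by norm_num) N R
    rw [this, Real.norm_eq_abs, abs_of_pos hRpos]
  refine ⟨3, ![x, x + e, y + e, y], rfl, rfl, ?_⟩
  have hsum : ∑ i : Fin 3, segLen m f
        ((![x, x + e, y + e, y]) i.castSucc) ((![x, x + e, y + e, y]) i.succ)
      = segLen m f x (x + e) + segLen m f (x + e) (y + e) + segLen m f (y + e) y := by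
    rw [Fin.sum_univ_three]; rfl
  rw [hsum]
  -- common quantity ε/4 bounds
  -- segment 1
  have hseg1 : segLen m f x (x + e) ≤ Real.sqrt (m N) * |R| :=
    segLen_single_le m f x (x + e) N R (hm N).le (add_sub_cancel_left x e)
  have hseg3 : segLen m f (y + e) y ≤ Real.sqrt (m N) * |(-R)| := by
    apply segLen_single_le m f (y + e) y N (-R) (hm N).le
    rw [lp.single_neg, ← he]
    abel
  have hsqrtN : Real.sqrt (m N) < ε / (4 * (R + 1)) := by
    have h1 : Real.sqrt (m N) < Real.sqrt ((ε / (4 * (R + 1))) ^ 2) :=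
      Real.sqrt_lt_sqrt (hm N).le hN
    rwa [Real.sqrt_sq (by positivity)] at h1
  have hquarter : Real.sqrt (m N) * |R| < ε / 4 := by
    rw [abs_of_pos hRpos]
    calc Real.sqrt (m N) * R ≤ Real.sqrt (m N) * (R + 1) := by
          apply mul_le_mul_of_nonneg_left (by linarith) (Real.sqrt_nonneg _)
      _ < (ε / (4 * (R + 1))) * (R + 1) := by
          apply mul_lt_mul_of_pos_right hsqrtN (by linarith)
      _ = ε / 4 := by field_simp
  -- segment 2
  have hseg2 : segLen m f (x + e) (y + e) ≤ Real.sqrt δ * ‖y - x‖ := by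
    apply segLen_le
    intro t ht
    obtain ⟨ht0, ht1⟩ := ht
    set z := (1 - t) • (x + e) + t • (y + e) with hz
    have hdiff : (y + e) - (x + e) = y - x := by abel
    have hzeq : z = ((1 - t) • x + t • y) + e := by
      rw [hz]; module
    have hcM : ‖(1 - t) • x + t • y‖ ≤ M := by
      calc ‖(1 - t) • x + t • y‖ ≤ ‖(1 - t) • x‖ + ‖t • y‖ := norm_add_le _ _
        _ = |1 - t| * ‖x‖ + |t| * ‖y‖ := by rw [norm_smul, norm_smul]; rfl
        _ = (1 - t) * ‖x‖ + t * ‖y‖ := by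
            rw [abs_of_nonneg (by linarith), abs_of_nonneg (by linarith)]
        _ ≤ (1 - t) * M + t * M := by
            apply add_le_add <;> apply mul_le_mul_of_nonneg_left ?_ (by linarith)
            exacts [hxM, hyM]
        _ = M := by ring
    have hznorm : a ≤ ‖z‖ := by
      have h1 : ‖e‖ ≤ ‖((1 - t) • x + t • y) + e‖ + ‖(1 - t) • x + t • y‖ := by
        have := norm_sub_le (((1 - t) • x + t • y) + e) ((1 - t) • x + t • y)
        simpa using this
      rw [← hzeq] at h1
      rw [hnorme, hR] at h1
      linarith
    have hz1 : 1 ≤ ‖z‖ := le_trans ha1 hznorm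
    have hzsq : S ≤ ‖z‖ ^ 2 := by
      calc S ≤ a := haS
        _ ≤ ‖z‖ := hznorm
        _ ≤ ‖z‖ ^ 2 := le_self_pow₀ hz1 two_ne_zero
    have hfz : f (‖z‖ ^ 2) < δ := hS _ hzsq
    have hfz0 : 0 < f (‖z‖ ^ 2) := hfpos _ (lt_of_lt_of_le one_pos (one_le_pow₀ hz1))
    have hle : Gconv m f z (y - x) ≤ f (‖z‖ ^ 2) * ‖y - x‖ ^ 2 := by
      have := Gconv_le m f z (y - x) 0 (y - x) (by rw [zero_add]) ?_
      · have h0 : (∑' i, m i * (((0 : lp (fun _ : ℕ => ℝ) 2)) i) ^ 2) = 0 := by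
          simp
        rw [h0, zero_add] at this
        exact this
      · have h0 : (∑' i, m i * (((0 : lp (fun _ : ℕ => ℝ) 2)) i) ^ 2) = 0 := by
          simp
        rw [h0, zero_add]
        positivity
    rw [hdiff]
    calc Real.sqrt (Gconv m f z (y - x)) ≤ Real.sqrt (f (‖z‖ ^ 2) * ‖y - x‖ ^ 2) :=
          Real.sqrt_le_sqrt hle
      _ ≤ Real.sqrt (δ * ‖y - x‖ ^ 2) := by
          apply Real.sqrt_le_sqrt
          apply mul_le_mul_of_nonneg_right hfz.le (sq_nonneg _)
      _ = Real.sqrt δ * ‖y - x‖ := by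
          rw [Real.sqrt_mul hδ.le, Real.sqrt_sq (norm_nonneg _)]
  have hquarter2 : Real.sqrt δ * ‖y - x‖ < ε / 4 := by
    have hsd : Real.sqrt δ = ε / (4 * (‖y - x‖ + 1)) := by
      rw [hδdef, Real.sqrt_sq (by positivity)]
    rw [hsd]
    have hpos : 0 < ε / (4 * (‖y - x‖ + 1)) := by positivity
    calc ε / (4 * (‖y - x‖ + 1)) * ‖y - x‖
        < ε / (4 * (‖y - x‖ + 1)) * (‖y - x‖ + 1) := by
          apply mul_lt_mul_of_pos_left (by linarith) hpos
      _ = ε / 4 := by field_simp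
  have habs : |(-R)| = |R| := abs_neg R
  rw [habs] at hseg3
  linarith
end

section
/- Let 𝓜 be a manifold with Riemannian metrics G¹ and G² such that the geodesic distance of G¹ is non-degenerate, and suppose that on every G¹-metric ball B_r(x₀) there is a constant C > 0 with C·G¹_x(u,u) ≤ G²_x(u,u) for all x ∈ B_r(x₀) and u ∈ T_x𝓜. Then the geodesic distance of the infimal convolution metric G = G¹ * G² is non-degenerate; in fact for any path γ in B_r(x) joining x to y, the G-length of γ is at least (1/2)·min(1, √C) times its G¹-length. -/
/-- Infimal convolution of two pointwise quadratic forms G¹, G² on a real inner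
product space V (serving as simplified model of the manifold 𝓜). -/
noncomputable def infConv {V : Type*} [NormedAddCommGroup V] [InnerProductSpace ℝ V]
    (G₁ G₂ : V → V → ℝ) (x u : V) : ℝ :=
  sInf {s : ℝ | ∃ v w : V, v + w = u ∧ s = G₁ x v + G₂ x w}

lemma infConv_key {V : Type*} [NormedAddCommGroup V] [InnerProductSpace ℝ V]
    (G₁ G₂ : V → V → ℝ)
    (h₁nonneg : ∀ x u, 0 ≤ G₁ x u) (h₂nonneg : ∀ x u, 0 ≤ G₂ x u)
    (h₁quad : ∀ x v w, G₁ x (v + w) ≤ 2 * G₁ x v + 2 * G₁ x w)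
    (C : ℝ) (hC : 0 < C) (x u : V)
    (hdom : ∀ u : V, C * G₁ x u ≤ G₂ x u) :
    (1 / 2) * min 1 (Real.sqrt C) * Real.sqrt (G₁ x u) ≤
      Real.sqrt (infConv G₁ G₂ x u) := by
  set m : ℝ := min 1 (Real.sqrt C) with hm
  have hm0 : 0 ≤ m := le_min zero_le_one (Real.sqrt_nonneg C)
  have hmsq : m ^ 2 = min 1 C := by
    rcases le_total 1 C with h | h
    · have : m = 1 := min_eq_left (by
        rw [show (1:ℝ) = Real.sqrt 1 by simp]
        exact Real.sqrt_le_sqrt h)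
      rw [this, min_eq_left h]; ring
    · have : m = Real.sqrt C := min_eq_right (by
        rw [show (1:ℝ) = Real.sqrt 1 by simp]
        exact Real.sqrt_le_sqrt h)
      rw [this, min_eq_right h, Real.sq_sqrt hC.le]
  have hkey : (1 / 4) * min 1 C * G₁ x u ≤ infConv G₁ G₂ x u := by
    refine le_csInf ⟨G₁ x u + G₂ x 0, u, 0, add_zero u, rfl⟩ ?_
    rintro s ⟨v, w, hvw, rfl⟩
    have h1 : G₁ x u ≤ 2 * G₁ x v + 2 * G₁ x w := hvw ▸ h₁quad x v w
    have h2 : C * G₁ x w ≤ G₂ x w := hdom w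
    have hmin1 : min 1 C ≤ 1 := min_le_left _ _
    have hminC : min 1 C ≤ C := min_le_right _ _
    have hminpos : 0 ≤ min 1 C := le_min zero_le_one hC.le
    nlinarith [h₁nonneg x u, h₁nonneg x v, h₁nonneg x w, h₂nonneg x w,
      mul_le_mul_of_nonneg_right hminC (h₁nonneg x w),
      mul_le_mul_of_nonneg_right hmin1 (h₁nonneg x v)]
  have hL : 0 ≤ (1 / 2) * m * Real.sqrt (G₁ x u) := by positivity
  have hminpos : (0:ℝ) ≤ min 1 C := le_min zero_le_one hC.le
  have hI : 0 ≤ infConv G₁ G₂ x u :=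
    le_trans (mul_nonneg (mul_nonneg (by norm_num) hminpos) (h₁nonneg x u)) hkey
  refine (Real.le_sqrt hL hI).mpr ?_
  have : ((1 / 2) * m * Real.sqrt (G₁ x u)) ^ 2
      = (1 / 4) * (m ^ 2) * (Real.sqrt (G₁ x u)) ^ 2 := by ring
  rw [this, hmsq, Real.sq_sqrt (h₁nonneg x u)]
  linarith [hkey]

/-- If the geodesic distance of G¹ is controlled and C·G¹ ≤ G² along a path, then the
infimal-convolution length of the path is bounded below by (1/2)·min(1,√C) times its
G¹-length (simplified inner-product-space version of the non-degeneracy lemma for the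
infimal convolution metric G = G¹ * G²). -/
theorem stmt10 {V : Type*} [NormedAddCommGroup V] [InnerProductSpace ℝ V]
    (G₁ G₂ : V → V → ℝ)
    (h₁nonneg : ∀ x u, 0 ≤ G₁ x u) (h₂nonneg : ∀ x u, 0 ≤ G₂ x u)
    (h₁quad : ∀ x v w, G₁ x (v + w) ≤ 2 * G₁ x v + 2 * G₁ x w)
    (C : ℝ) (hC : 0 < C)
    (c c' : ℝ → V)
    (hdom : ∀ t ∈ Set.Icc (0:ℝ) 1, ∀ u : V, C * G₁ (c t) u ≤ G₂ (c t) u)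
    (hint : IntervalIntegrable
      (fun t => Real.sqrt (infConv G₁ G₂ (c t) (c' t))) MeasureTheory.volume 0 1)
    (hint1 : IntervalIntegrable
      (fun t => Real.sqrt (G₁ (c t) (c' t))) MeasureTheory.volume 0 1) :
    (1 / 2) * min 1 (Real.sqrt C) * ∫ t in (0:ℝ)..1, Real.sqrt (G₁ (c t) (c' t)) ≤
      ∫ t in (0:ℝ)..1, Real.sqrt (infConv G₁ G₂ (c t) (c' t)) := by
  rw [← intervalIntegral.integral_const_mul]
  apply intervalIntegral.integral_mono_on zero_le_one
    (hint1.const_mul _) hint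
  intro t ht
  exact infConv_key G₁ G₂ h₁nonneg h₂nonneg h₁quad C hC (c t) (c' t) (hdom t ht)
end
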